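/- arXiv:1412.8546 — 2 statements merged into one kernel-verified Lean document; each statement's English description precedes it below -/
import Mathlib

section
/- Let R be a binary relation on a set Con, and let μ, ν be finite-support probability distributions on Con. Then there exists a weight function for (μ, ν) with respect to R (i.e., a function δ : Con × Con → [0,1] with ∑_{D' ∈ supp(ν)} δ(C,D') = μ(C) for all C, ∑_{C' ∈ supp(μ)} δ(C',D) = ν(D) for all D, and δ(C,D) > 0 implies C R D) if and only if there exist an index set I, nonnegative reals {p_i}_{i∈I} summing to 1, and families {C_i}_{i∈I}, {D_i}_{i∈I} such that μ = ∑_{i∈I} p_i·δ_{C_i}, ν = ∑_{i∈I} p_i·δ_{D_i}, and C_i R D_i for each i ∈ I. -/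
/-!
A weight function is a finitely supported joint distribution on `Con × Con` with marginals
`μ` and `ν`, carried by `R`. Enumerating its support `(Cᵢ, Dᵢ)` with masses `pᵢ = δ(Cᵢ, Dᵢ)`
gives the decomposition; conversely a decomposition pushes forward to the weight function
`δ(c, d) = ∑_{Cᵢ = c, Dᵢ = d} pᵢ`.
-/

/-- A finite-support probability distribution. -/
structure FDist (Con : Type*) where
  toFun : Con → ℝ
  nonneg : ∀ c, 0 ≤ toFun c
  finite : (Function.support toFun).Finite
  sum_one : ∑ᶠ c, toFun c = 1

/-- `δ` is a weight function for `(μ, ν)` w.r.t. the relation `R`. -/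
def IsWeight {Con : Type*} (R : Con → Con → Prop) (μ ν : FDist Con)
    (δ : Con → Con → ℝ) : Prop :=
  (∀ c d, 0 ≤ δ c d ∧ δ c d ≤ 1) ∧
  (Function.support (Function.uncurry δ)).Finite ∧
  (∀ c, ∑ᶠ d, δ c d = μ.toFun c) ∧
  (∀ d, ∑ᶠ c, δ c d = ν.toFun d) ∧
  (∀ c d, 0 < δ c d → R c d)

/-- The lifting of a relation to finite-support distributions via weight functions. -/
def Lift {Con : Type*} (R : Con → Con → Prop) (μ ν : FDist Con) : Prop :=
  ∃ δ, IsWeight R μ ν δ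

open Function

section PairSums

variable {α β M : Type*} [AddCommMonoid M]

theorem finsum_ite_fst_eq [DecidableEq α] {f : α × β → M} (hf : (support f).Finite) (x : α) :
    ∑ᶠ y, (if y.1 = x then f y else 0) = ∑ᶠ b, f (x, b) := by
  rw [finsum_curry _ (hf.subset fun y hy => mt (fun h => by simp [h]) hy),
    finsum_eq_single _ x fun a ha => by simp [ha]]
  simp

theorem finsum_ite_snd_eq [DecidableEq β] {f : α × β → M} (hf : (support f).Finite) (x : β) :
    ∑ᶠ y, (if y.2 = x then f y else 0) = ∑ᶠ a, f (a, x) := by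
  rw [← finsum_comp_equiv (Equiv.prodComm β α)]
  refine finsum_ite_fst_eq (f := f ∘ Prod.swap) ?_ x
  rw [support_comp_eq_preimage]
  exact hf.preimage Prod.swap_injective.injOn

end PairSums

section Decomposition

variable {Con ι κ : Type*} [DecidableEq Con] [Fintype ι] [Fintype κ]

def IsDecomposition (R : Con → Con → Prop) (μ ν : FDist Con) (p : ι → ℝ) (C D : ι → Con) :
    Prop :=
  (∀ i, 0 ≤ p i) ∧ (∑ i, p i = 1) ∧
    (∀ x, μ.toFun x = ∑ i, if C i = x then p i else 0) ∧
    (∀ x, ν.toFun x = ∑ i, if D i = x then p i else 0) ∧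
    (∀ i, R (C i) (D i))

variable {R : Con → Con → Prop} {μ ν : FDist Con}

theorem IsDecomposition.comp_equiv {p : ι → ℝ} {C D : ι → Con}
    (h : IsDecomposition R μ ν p C D) (e : κ ≃ ι) :
    IsDecomposition R μ ν (p ∘ e) (C ∘ e) (D ∘ e) := by
  obtain ⟨hp, hp1, hμ, hν, hR⟩ := h
  refine ⟨fun i => hp (e i), ?_, fun x => ?_, fun x => ?_, fun i => hR (e i)⟩
  · rwa [← e.sum_comp] at hp1
  · rw [hμ, ← e.sum_comp]; rfl
  · rw [hν, ← e.sum_comp]; rfl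

theorem IsWeight.isDecomposition {δ : Con → Con → ℝ} (hδ : IsWeight R μ ν δ)
    {s : Finset (Con × Con)} (hs : (s : Set (Con × Con)) = support (uncurry δ)) :
    IsDecomposition R μ ν (fun y : s => δ y.1.1 y.1.2) (fun y => y.1.1) (fun y => y.1.2) := by
  obtain ⟨h01, hfin, hμ, hν, hR⟩ := hδ
  have sum_eq {g : Con × Con → ℝ} (hg : support g ⊆ support (uncurry δ)) :
      ∑ y : s, g y = ∑ᶠ y, g y :=
    (s.sum_coe_sort g).trans (finsum_eq_finsetSum_of_support_subset g (hs ▸ hg)).symm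
  have ite_support {P : Con × Con → Prop} [DecidablePred P] :
      support (fun y => if P y then uncurry δ y else 0) ⊆ support (uncurry δ) :=
    fun y hy => mt (fun h => by simp [h]) hy
  refine ⟨fun y => (h01 _ _).1, ?_, fun x => ?_, fun x => ?_, fun y => ?_⟩
  · calc ∑ y : s, uncurry δ y
        _ = ∑ᶠ c, ∑ᶠ d, δ c d := (sum_eq subset_rfl).trans (finsum_curry _ hfin)
        _ = 1 := by simp only [hμ, μ.sum_one]
  · exact ((sum_eq ite_support).trans (finsum_ite_fst_eq hfin x)).trans (hμ x) |>.symm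
  · exact ((sum_eq ite_support).trans (finsum_ite_snd_eq hfin x)).trans (hν x) |>.symm
  · have hy : uncurry δ y.1 ≠ 0 := by
      rw [← mem_support, ← hs]; exact y.2
    exact hR _ _ ((h01 _ _).1.lt_of_ne' hy)

def decompositionWeight (p : ι → ℝ) (C D : ι → Con) (c d : Con) : ℝ :=
  ∑ i, if C i = c ∧ D i = d then p i else 0

theorem exists_of_decompositionWeight_ne_zero {p : ι → ℝ} {C D : ι → Con} {c d : Con}
    (h : decompositionWeight p C D c d ≠ 0) : ∃ i, C i = c ∧ D i = d := by
  obtain ⟨i, -, hi⟩ := Finset.exists_ne_zero_of_sum_ne_zero h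
  exact ⟨i, by_contra fun hne => hi (if_neg hne)⟩

theorem finsum_decompositionWeight_right (p : ι → ℝ) (C D : ι → Con) (c : Con) :
    ∑ᶠ d, decompositionWeight p C D c d = ∑ i, if C i = c then p i else 0 := by
  unfold decompositionWeight
  rw [finsum_sum_comm]
  · refine Finset.sum_congr rfl fun i _ => ?_
    rw [finsum_eq_single _ (D i) fun d hd => by simp [Ne.symm hd]]
    simp
  · intro i _
    refine (Set.finite_singleton (D i)).subset fun d hd => ?_
    by_contra hne
    exact hd (if_neg fun h => hne h.2.symm)

theorem decompositionWeight_swap (p : ι → ℝ) (C D : ι → Con) (c d : Con) :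
    decompositionWeight p C D c d = decompositionWeight p D C d c := by
  simp only [decompositionWeight, and_comm]

theorem finsum_decompositionWeight_left (p : ι → ℝ) (C D : ι → Con) (d : Con) :
    ∑ᶠ c, decompositionWeight p C D c d = ∑ i, if D i = d then p i else 0 := by
  simp only [decompositionWeight_swap p C D, finsum_decompositionWeight_right]

theorem IsDecomposition.isWeight {p : ι → ℝ} {C D : ι → Con}
    (h : IsDecomposition R μ ν p C D) : IsWeight R μ ν (decompositionWeight p C D) := by
  obtain ⟨hp, hp1, hμ, hν, hR⟩ := h
  refine ⟨fun c d => ⟨?_, ?_⟩, ?_, fun c => ?_, fun d => ?_, fun c d hcd => ?_⟩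
  · exact Finset.sum_nonneg fun i _ => by split_ifs <;> simp [hp i]
  · exact hp1 ▸ Finset.sum_le_sum fun i _ => by split_ifs <;> simp [hp i]
  · refine (Set.finite_range fun i => (C i, D i)).subset fun y hy => ?_
    obtain ⟨i, hc, hd⟩ := exists_of_decompositionWeight_ne_zero hy
    exact ⟨i, Prod.ext hc hd⟩
  · rw [finsum_decompositionWeight_right, hμ]
  · rw [finsum_decompositionWeight_left, hν]
  · obtain ⟨i, rfl, rfl⟩ := exists_of_decompositionWeight_ne_zero hcd.ne'
    exact hR i

end Decomposition

/-- There is a weight function for `(μ, ν)` w.r.t. `R` iff `μ` and `ν` decompose as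
matching convex combinations of point distributions related pointwise by `R`. -/
theorem lift_iff_exists_decomposition {Con : Type*} [DecidableEq Con] (R : Con → Con → Prop)
    (μ ν : FDist Con) :
    Lift R μ ν ↔
      ∃ (n : ℕ) (p : Fin n → ℝ) (C D : Fin n → Con),
        (∀ i, 0 ≤ p i) ∧ (∑ i, p i = 1) ∧
        (∀ x, μ.toFun x = ∑ i, if C i = x then p i else 0) ∧
        (∀ x, ν.toFun x = ∑ i, if D i = x then p i else 0) ∧
        (∀ i, R (C i) (D i)) := by
  constructor
  · rintro ⟨δ, hδ⟩
    let s := hδ.2.1.toFinset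
    exact ⟨_, _, _, _, (hδ.isDecomposition hδ.2.1.coe_toFinset).comp_equiv s.equivFin.symm⟩
  · rintro ⟨n, p, C, D, h⟩
    exact ⟨_, IsDecomposition.isWeight h⟩
end

section
/- If R is transitive on a set Con, then the lifting of R to finite-support probability distributions via weight functions is transitive: if μ R̂ ν and ν R̂ ξ then μ R̂ ξ. -/
/-- The point (Dirac) distribution at `c`. -/
noncomputable def pointDist {Con : Type*} [DecidableEq Con] (c : Con) : FDist Con where
  toFun x := if x = c then 1 else 0
  nonneg x := by split <;> norm_num
  finite := Set.Finite.subset (Set.finite_singleton c) (fun x hx => by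
    by_contra h
    simp only [Function.mem_support] at hx
    simp only [Set.mem_singleton_iff] at h
    simp [h] at hx)
  sum_one := by
    rw [finsum_eq_single _ c]
    · simp
    · intro x hx; simp [hx]

/-! Compose the two weight functions through the middle marginal `ν`:
`δ''(c, e) = ∑_d δ(c, d) δ'(d, e) / ν(d)`. Since the rows of `δ'` and the columns of `δ` sum
to `ν`, the marginals of `δ''` are `μ` and `ξ`; and `δ''(c, e) > 0` forces some `d` with
`δ(c, d) > 0` and `δ'(d, e) > 0`, so `R c d` and `R d e`, whence `R c e`. -/

open Function

section Finsum

variable {α β M : Type*}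

theorem finite_support_uncurry_flip [Zero M] {f : α → β → M}
    (hf : (support (uncurry f)).Finite) : (support (uncurry (flip f))).Finite :=
  hf.preimage Prod.swap_injective.injOn

theorem finite_support_apply [Zero M] {f : α → β → M}
    (hf : (support (uncurry f)).Finite) (a : α) : (support (f a)).Finite :=
  hf.preimage (Prod.mk_right_injective a).injOn

theorem finsum_comm_of_finite_support [AddCommMonoid M] {f : α → β → M}
    (hf : (support (uncurry f)).Finite) :
    ∑ᶠ a, ∑ᶠ b, f a b = ∑ᶠ b, ∑ᶠ a, f a b :=
  calc ∑ᶠ a, ∑ᶠ b, f a b = ∑ᶠ p, uncurry f p := (finsum_curry _ hf).symm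
    _ = ∑ᶠ p, uncurry (flip f) p := (finsum_comp_equiv (Equiv.prodComm β α)).symm
    _ = ∑ᶠ b, ∑ᶠ a, f a b := finsum_curry _ (finite_support_uncurry_flip hf)

end Finsum

section CompWeight

variable {α β γ : Type*} (ν : β → ℝ) (δ : α → β → ℝ) (δ' : β → γ → ℝ)

/-- Where `ν b = 0` the term is `x / 0 = 0`; this plays the role of the restriction to
`ν(D) > 0` in the paper's formula. -/
noncomputable def compWeight (a : α) (c : γ) : ℝ :=
  ∑ᶠ b, δ a b * δ' b c / ν b

theorem compWeight_comm (a : α) (c : γ) :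
    compWeight ν δ δ' a c = compWeight ν (flip δ') (flip δ) c a := by
  simp only [compWeight, flip, mul_comm]

variable {ν δ δ'}

theorem exists_ne_zero_of_compWeight_ne_zero {a : α} {c : γ} (h : compWeight ν δ δ' a c ≠ 0) :
    ∃ b, δ a b ≠ 0 ∧ δ' b c ≠ 0 := by
  by_contra! hzero
  refine h (finsum_eq_zero_of_forall_eq_zero fun b => ?_)
  by_cases hb : δ a b = 0
  · simp [hb]
  · simp [hzero b hb]

theorem support_uncurry_compWeight_subset :
    support (uncurry (compWeight ν δ δ')) ⊆
      (Prod.fst '' support (uncurry δ)) ×ˢ (Prod.snd '' support (uncurry δ')) := by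
  rintro ⟨a, c⟩ h
  obtain ⟨b, hab, hbc⟩ := exists_ne_zero_of_compWeight_ne_zero h
  exact ⟨⟨(a, b), hab, rfl⟩, ⟨(b, c), hbc, rfl⟩⟩

theorem compWeight_nonneg (hν : ∀ b, 0 ≤ ν b) (hδ : ∀ a b, 0 ≤ δ a b) (hδ' : ∀ b c, 0 ≤ δ' b c)
    (a : α) (c : γ) : 0 ≤ compWeight ν δ δ' a c :=
  finsum_nonneg fun b => div_nonneg (mul_nonneg (hδ a b) (hδ' b c)) (hν b)

theorem finsum_compWeight_left (hδ' : (support (uncurry δ')).Finite)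
    (hrow : ∀ b, ∑ᶠ c, δ' b c = ν b) (a : α) (hvanish : ∀ b, ν b = 0 → δ a b = 0) :
    ∑ᶠ c, compWeight ν δ δ' a c = ∑ᶠ b, δ a b := by
  have hfin : (support (uncurry fun b c => δ a b / ν b * δ' b c)).Finite :=
    hδ'.subset fun p hp => right_ne_zero_of_mul hp
  calc ∑ᶠ c, compWeight ν δ δ' a c = ∑ᶠ c, ∑ᶠ b, δ a b / ν b * δ' b c := by
        simp only [compWeight, mul_div_right_comm]
    _ = ∑ᶠ b, δ a b / ν b * ∑ᶠ c, δ' b c := by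
        rw [← finsum_comm_of_finite_support hfin]
        simp only [mul_finsum]
    _ = ∑ᶠ b, δ a b := by
        simp only [hrow, div_mul_cancel_of_imp (hvanish _)]

theorem finsum_compWeight_right (hδ : (support (uncurry δ)).Finite)
    (hcol : ∀ b, ∑ᶠ a, δ a b = ν b) (c : γ) (hvanish : ∀ b, ν b = 0 → δ' b c = 0) :
    ∑ᶠ a, compWeight ν δ δ' a c = ∑ᶠ b, δ' b c := by
  simp only [compWeight_comm ν δ δ' _ c]
  exact finsum_compWeight_left (finite_support_uncurry_flip hδ) hcol c hvanish

end CompWeight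

theorem FDist.apply_le_one {Con : Type*} (μ : FDist Con) (c : Con) : μ.toFun c ≤ 1 :=
  μ.sum_one ▸ single_le_finsum c μ.finite μ.nonneg

namespace IsWeight

variable {Con : Type*} {R S : Con → Con → Prop} {μ ν ξ : FDist Con} {δ δ' : Con → Con → ℝ}

theorem le_left (h : IsWeight R μ ν δ) (c d : Con) : δ c d ≤ μ.toFun c :=
  h.2.2.1 c ▸ single_le_finsum d (finite_support_apply h.2.1 c) fun d' => (h.1 c d').1

theorem le_right (h : IsWeight R μ ν δ) (c d : Con) : δ c d ≤ ν.toFun d :=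
  h.2.2.2.1 d ▸ single_le_finsum c (finite_support_apply (finite_support_uncurry_flip h.2.1) d)
    fun c' => (h.1 c' d).1

theorem eq_zero_of_left_eq_zero (h : IsWeight R μ ν δ) (c d : Con) (hc : μ.toFun c = 0) :
    δ c d = 0 :=
  le_antisymm (hc ▸ h.le_left c d) (h.1 c d).1

theorem eq_zero_of_right_eq_zero (h : IsWeight R μ ν δ) (c d : Con) (hd : ν.toFun d = 0) :
    δ c d = 0 :=
  le_antisymm (hd ▸ h.le_right c d) (h.1 c d).1

theorem mono (h : IsWeight R μ ν δ) (hRS : ∀ a b, R a b → S a b) : IsWeight S μ ν δ :=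
  ⟨h.1, h.2.1, h.2.2.1, h.2.2.2.1, fun a b hab => hRS a b (h.2.2.2.2 a b hab)⟩

theorem comp (h : IsWeight R μ ν δ) (h' : IsWeight S ν ξ δ') :
    IsWeight (Relation.Comp R S) μ ξ (compWeight ν.toFun δ δ') := by
  have hvanish := h.eq_zero_of_right_eq_zero
  have hvanish' := h'.eq_zero_of_left_eq_zero
  obtain ⟨hbd, hfin, hrow, hcol, hrel⟩ := h
  obtain ⟨hbd', hfin', hrow', hcol', hrel'⟩ := h'
  have hnonneg := compWeight_nonneg ν.nonneg (fun c d => (hbd c d).1) fun d e => (hbd' d e).1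
  have hsupp : (support (uncurry (compWeight ν.toFun δ δ'))).Finite :=
    ((hfin.image _).prod (hfin'.image _)).subset support_uncurry_compWeight_subset
  have hrow'' (c : Con) : ∑ᶠ e, compWeight ν.toFun δ δ' c e = μ.toFun c := by
    rw [finsum_compWeight_left hfin' hrow' c (hvanish c), hrow]
  refine ⟨fun c e => ⟨hnonneg c e, ?_⟩, hsupp, hrow'', fun e => ?_, fun c e hpos => ?_⟩
  · calc compWeight ν.toFun δ δ' c e ≤ ∑ᶠ e', compWeight ν.toFun δ δ' c e' :=
          single_le_finsum e (finite_support_apply hsupp c) (hnonneg c)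
      _ = μ.toFun c := hrow'' c
      _ ≤ 1 := μ.apply_le_one c
  · rw [finsum_compWeight_right hfin hcol e fun d => hvanish' d e, hcol']
  · obtain ⟨d, hcd, hde⟩ := exists_ne_zero_of_compWeight_ne_zero hpos.ne'
    exact ⟨d, hrel c d ((hbd c d).1.lt_of_ne' hcd), hrel' d e ((hbd' d e).1.lt_of_ne' hde)⟩

end IsWeight

/-- If `R` is transitive, its lifting via weight functions is transitive. -/
theorem lift_trans {Con : Type*} (R : Con → Con → Prop)
    (hR : ∀ a b c, R a b → R b c → R a c) (μ ν ξ : FDist Con)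
    (h1 : Lift R μ ν) (h2 : Lift R ν ξ) :
    Lift R μ ξ := by
  obtain ⟨δ, hδ⟩ := h1
  obtain ⟨δ', hδ'⟩ := h2
  exact ⟨_, (hδ.comp hδ').mono fun a c ⟨b, hab, hbc⟩ => hR a b c hab hbc⟩
end
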